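/- arXiv:0706.0248 — 5 statements merged into one kernel-verified Lean document; each statement's English description precedes it below -/
import Mathlib

section
/- Let π be a set of primes, T a finite semigroup, and Z ⊆ T a V-pointlike subset of T for the pseudovariety V = \bar{G}_π of finite semigroups all of whose subgroups are π-groups. If Z generates a cyclic π'-group in P(T) (i.e., Z is a group element of P(T) whose order k is divisible only by primes not in π), then Z^{ω+*} = ⋃_{n≥1} Z^n is also V-pointlike. -/
open Pointwise

/-- Multiplication of an element of a semigroup `M` by an element of `M¹ = M` with an
adjoined identity (modelled as `Option M`, `none` being the identity `I`). -/
def hmul {M : Type*} [Mul M] (h : M) : Option M → M := fun s => s.elim h (fun u => h * u)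

/-- Multiplication in `M¹` (modelled as `Option M`). -/
def omul {M : Type*} [Mul M] : Option M → Option M → Option M
  | none, t => t
  | some a, none => some a
  | some a, some b => some (a * b)

/-- `mpow a n = aⁿ` for `n ≥ 1` (with the junk value `mpow a 0 = a`). -/
def mpow {M : Type*} [Mul M] (a : M) : ℕ → M
  | 0 => a
  | 1 => a
  | n+2 => mpow a (n+1) * a

/-- Green's preorder `a ≤_L b` iff `a ∈ M¹ b`. -/
def leL {M : Type*} [Mul M] (a b : M) : Prop := a = b ∨ ∃ u, a = u * b
/-- Green's preorder `a ≤_R b` iff `a ∈ b M¹`. -/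
def leR {M : Type*} [Mul M] (a b : M) : Prop := a = b ∨ ∃ u, a = b * u
/-- Green's `L`-equivalence. -/
def eqL {M : Type*} [Mul M] (a b : M) : Prop := leL a b ∧ leL b a
/-- Green's `R`-equivalence. -/
def eqR {M : Type*} [Mul M] (a b : M) : Prop := leR a b ∧ leR b a
/-- Green's `H`-equivalence. -/
def eqH {M : Type*} [Mul M] (a b : M) : Prop := eqL a b ∧ eqR a b
/-- `a <_H b` : `a ≤_L b`, `a ≤_R b`, but `a` is not `H`-equivalent to `b`. -/
def ltH {M : Type*} [Mul M] (a b : M) : Prop := leL a b ∧ leR a b ∧ ¬ eqH a b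

/-- The `H`-class of `a`, as a type. -/
def HclsT {M : Type*} [Mul M] (a : M) := {x : M // eqH x a}

/-- The (right) Schützenberger group of the `H`-class of `a`: the set of transformations of the
`H`-class of `a` induced by right multiplication by elements of the right stabilizer in `M¹`. -/
def gammaR {M : Type*} [Mul M] (a : M) : Set (HclsT a → HclsT a) :=
  {f | ∃ s : Option M, (∀ h : HclsT a, eqH (hmul h.1 s) a) ∧
        ∀ h : HclsT a, (f h).1 = hmul h.1 s}

/-- An element is `π'`-free if the Schützenberger group of its (`J`-class, equivalently its)
`H`-class is a `π`-group: every prime dividing its order lies in `π`. -/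
def piFree {M : Type*} [Mul M] (π : Set ℕ) (a : M) : Prop :=
  ∀ p : ℕ, p.Prime → p ∣ (gammaR a).ncard → p ∈ π

/-- A subset `G` of a semigroup is a subgroup: a nonempty subsemigroup with an identity
and inverses. -/
def IsSubgroupSet {M : Type*} [Mul M] (G : Set M) : Prop :=
  G.Nonempty ∧ (∀ a ∈ G, ∀ b ∈ G, a * b ∈ G) ∧
    ∃ e ∈ G, (∀ g ∈ G, e * g = g ∧ g * e = g) ∧ ∀ g ∈ G, ∃ h ∈ G, g * h = e ∧ h * g = e

/-- `N` lies in the pseudovariety `Ḡ_π`: every subgroup of `N` is a `π`-group. -/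
def InGbarPi (π : Set ℕ) (N : Type*) [Mul N] : Prop :=
  ∀ G : Set N, IsSubgroupSet G → ∀ p : ℕ, p.Prime → p ∣ G.ncard → p ∈ π

/-- A relational morphism `φ : T → N`: a fully defined multiplicative relation. -/
def IsRelMorphism {T N : Type*} [Mul T] [Mul N] (φ : T → N → Prop) : Prop :=
  (∀ t, ∃ n, φ t n) ∧ ∀ t t' n n', φ t n → φ t' n' → φ (t * t') (n * n')

/-- `Z ⊆ T` is `Ḡ_π`-pointlike: for every relational morphism `φ : T → N` with `N`
a finite semigroup in `Ḡ_π`, `Z ⊆ nφ⁻¹` for some `n ∈ N`. -/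
def Pointlike (π : Set ℕ) {T : Type} [Semigroup T] [Fintype T] (Z : Set T) : Prop :=
  ∀ (N : Type) [Semigroup N] [Fintype N], InGbarPi π N →
    ∀ φ : T → N → Prop, IsRelMorphism φ → ∃ n : N, ∀ t ∈ Z, φ t n


section AuxMpow
variable {M : Type*} [Semigroup M]

lemma mpow_succ (a : M) (x : ℕ) : mpow a (x+2) = mpow a (x+1) * a := rfl

lemma mpow_add (a : M) (i j : ℕ) :
    mpow a (i + 1 + (j + 1)) = mpow a (i + 1) * mpow a (j + 1) := by
  induction j with
  | zero => rfl
  | succ j ih =>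
      have h1 : i + 1 + (j + 1 + 1) = (i + j + 1) + 2 := by omega
      have h2 : (i + j + 1) + 1 = i + 1 + (j + 1) := by omega
      rw [h1, mpow_succ, h2, ih, mpow_succ, mul_assoc]

lemma mpow_add' (a : M) {i j : ℕ} (hi : 1 ≤ i) (hj : 1 ≤ j) :
    mpow a (i + j) = mpow a i * mpow a j := by
  obtain ⟨i', rfl⟩ : ∃ i', i = i' + 1 := ⟨i - 1, by omega⟩
  obtain ⟨j', rfl⟩ : ∃ j', j = j' + 1 := ⟨j - 1, by omega⟩
  exact mpow_add a i' j'

lemma mpow_succ_left (a : M) (x : ℕ) : mpow a (x+2) = a * mpow a (x+1) := by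
  have := mpow_add a 0 x
  rw [show (0:ℕ) + 1 + (x + 1) = x + 2 by omega] at this
  simpa [mpow] using this

end AuxMpow

/-- Cyclic amalgamation: if `Z` is a `Ḡ_π`-pointlike subset of the finite semigroup `T` which is
a group element of `P(T)` of order `k` divisible only by primes outside `π` (so `Z` generates a
cyclic `π'`-group), then `Z^{ω+*} = ⋃_{n ≥ 1} Zⁿ` is again `Ḡ_π`-pointlike. -/
theorem stmt_2 (π : Set ℕ) {T : Type} [Semigroup T] [Fintype T] (Z : Set T)
    (hpl : Pointlike π Z) (k : ℕ) (hk : 0 < k) (hcyc : mpow Z (k+1) = Z)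
    (hπ' : ∀ p : ℕ, p.Prime → p ∣ k → p ∉ π) :
    Pointlike π (⋃ n, mpow Z (n+1)) := by
  classical
  intro N _ _ hN φ hφ
  obtain ⟨n, hn⟩ := hpl N hN φ hφ
  obtain ⟨hφ1, hφ2⟩ := hφ
  -- powers of Z map to powers of n
  have hpow : ∀ m, ∀ t ∈ mpow Z (m+1), φ t (mpow n (m+1)) := by
    intro m
    induction m with
    | zero => exact hn
    | succ m ih =>
        intro t ht
        rw [show mpow Z (m+1+1) = mpow Z (m+1) * Z from rfl] at ht
        obtain ⟨a, ha, b, hb, rfl⟩ := ht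
        rw [show mpow n (m+1+1) = mpow n (m+1) * n from rfl]
        exact hφ2 _ _ _ _ (ih a ha) (hn b hb)
  -- Z is k-periodic
  have hZ1 : ∀ m, mpow Z (m + 1 + k) = mpow Z (m + 1) := by
    intro m
    cases m with
    | zero =>
        rw [show (0:ℕ) + 1 + k = k + 1 by omega, hcyc]
        rfl
    | succ m =>
        rw [show m + 1 + 1 + k = (k + 1) + (m + 1) by omega,
          mpow_add' Z (by omega) (by omega), hcyc,
          show m + 1 + 1 = m + 2 from rfl, mpow_succ_left]
  have hZper : ∀ m j, mpow Z (m + 1 + j * k) = mpow Z (m + 1) := by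
    intro m j
    induction j with
    | zero => simp
    | succ j ih =>
        rw [show m + 1 + (j + 1) * k = (m + j * k) + 1 + k by ring, hZ1 (m + j * k),
          show m + j * k + 1 = m + 1 + j * k by omega, ih]
  -- collision among powers of n
  obtain ⟨a, c, ha, hc, hcol⟩ :
      ∃ a c, 1 ≤ a ∧ 1 ≤ c ∧ mpow n (a + c) = mpow n a := by
    obtain ⟨i, i', hne, heq⟩ := Fintype.exists_ne_map_eq_of_card_lt
      (fun i : Fin (Fintype.card N + 1) => mpow n (i.1 + 1)) (by simp)
    rcases lt_or_gt_of_ne (fun h : i.1 = i'.1 => hne (Fin.ext h)) with h | h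
    · exact ⟨i.1 + 1, i'.1 - i.1, by omega, by omega,
        by rw [show i.1 + 1 + (i'.1 - i.1) = i'.1 + 1 by omega]; exact heq.symm⟩
    · exact ⟨i'.1 + 1, i.1 - i'.1, by omega, by omega,
        by rw [show i'.1 + 1 + (i.1 - i'.1) = i.1 + 1 by omega]; exact heq⟩
  -- eventual c-periodicity of powers of n
  have hper : ∀ x, a ≤ x → mpow n (x + c) = mpow n x := by
    intro x hx
    rcases eq_or_lt_of_le hx with h | h
    · rw [← h]; exact hcol
    · rw [show x + c = (a + c) + (x - a) by omega,
        mpow_add' n (by omega) (by omega), hcol,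
        ← mpow_add' n (by omega) (by omega),
        show a + (x - a) = x by omega]
  have hpert : ∀ s x, a ≤ x → mpow n (x + s * c) = mpow n x := by
    intro s
    induction s with
    | zero => simp
    | succ s ih =>
        intro x hx
        rw [show x + (s + 1) * c = (x + s * c) + c by ring, hper _ (by omega), ih x hx]
  -- the idempotent power
  set r := a * c with hrdef
  have hra : a ≤ r := Nat.le_mul_of_pos_right a hc
  have hr1 : 1 ≤ r := le_trans ha hra
  have hidem : mpow n (r + r) = mpow n r := by
    rw [show r + r = r + a * c from rfl]
    exact hpert a r hra
  -- minimal period d at r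
  have hex : ∃ p, 0 < p ∧ mpow n (r + p) = mpow n r := ⟨r, hr1, hidem⟩
  set d := Nat.find hex with hddef
  obtain ⟨hd, hdper⟩ : 0 < d ∧ mpow n (r + d) = mpow n r := Nat.find_spec hex
  have hdmin : ∀ p, 0 < p → p < d → mpow n (r + p) ≠ mpow n r := by
    intro p h1 h2 he
    exact Nat.find_min hex h2 ⟨h1, he⟩
  have hperd : ∀ x, mpow n (r + x + d) = mpow n (r + x) := by
    intro x
    cases x with
    | zero => simpa using hdper
    | succ x =>
        rw [show r + (x + 1) + d = (r + d) + (x + 1) by omega,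
          mpow_add' n (by omega) (by omega), hdper,
          ← mpow_add' n (by omega) (by omega)]
  have hred : ∀ x, mpow n (r + x) = mpow n (r + x % d) := by
    intro x
    induction x using Nat.strong_induction_on with
    | _ x ih =>
      by_cases hx : x < d
      · rw [Nat.mod_eq_of_lt hx]
      · push_neg at hx
        rw [show r + x = r + (x - d) + d by omega, hperd, ih (x - d) (by omega),
          Nat.mod_eq_sub_mod hx]
  have hdr : d ∣ r := by
    have h1 : mpow n (r + r % d) = mpow n r := by rw [← hred]; exact hidem
    by_contra hcon
    have h2 : 0 < r % d := Nat.pos_of_ne_zero (fun h => hcon (Nat.dvd_of_mod_eq_zero h))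
    exact hdmin _ h2 (Nat.mod_lt _ hd) h1
  have hmod : ∀ i, (r + i) % d = i % d := by
    intro i
    obtain ⟨q, hq⟩ := hdr
    rw [hq, Nat.add_comm, Nat.add_mul_mod_self_left]
  -- the kernel group
  set G : Set N := ↑((Finset.range d).image (fun i => mpow n (r + i))) with hGdef
  have hmemG : ∀ i, mpow n (r + i) ∈ G := by
    intro i
    rw [hred i]
    exact Finset.mem_coe.mpr (Finset.mem_image.mpr
      ⟨i % d, Finset.mem_range.mpr (Nat.mod_lt _ hd), rfl⟩)
  have hmemG' : ∀ x ∈ G, ∃ i, i < d ∧ x = mpow n (r + i) := by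
    intro x hx
    obtain ⟨i, hi, he⟩ := Finset.mem_image.mp (Finset.mem_coe.mp hx)
    exact ⟨i, Finset.mem_range.mp hi, he.symm⟩
  have hGmul : ∀ i j, mpow n (r + i) * mpow n (r + j) = mpow n (r + (i + j) % d) := by
    intro i j
    rw [← mpow_add' n (by omega) (by omega),
      show (r + i) + (r + j) = r + (r + (i + j)) by omega, hred, hmod]
  have hinj : ∀ i < d, ∀ i' < d, mpow n (r + i) = mpow n (r + i') → i = i' := by
    have key : ∀ i i', i < i' → i' < d → mpow n (r + i) = mpow n (r + i') → False := by
      intro i i' hii hi'd he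
      have h1 : mpow n (r + i) * mpow n (d - i') = mpow n (r + i') * mpow n (d - i') := by
        rw [he]
      rw [← mpow_add' n (by omega) (by omega), ← mpow_add' n (by omega) (by omega),
        show r + i' + (d - i') = r + d by omega, hdper,
        show r + i + (d - i') = r + (i + (d - i')) by omega] at h1
      exact hdmin (i + (d - i')) (by omega) (by omega) h1
    intro i hi i' hi' he
    rcases lt_trichotomy i i' with h | h | h
    · exact absurd he (fun he => (key i i' h hi' he).elim)
    · exact h
    · exact absurd he.symm (fun he => (key i' i h hi he).elim)
  -- G is a subgroup
  have hsub : IsSubgroupSet G := by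
    refine ⟨⟨mpow n (r + 0), hmemG 0⟩, ?_, mpow n (r + 0), hmemG 0, ?_, ?_⟩
    · intro x hx y hy
      obtain ⟨i, hi, rfl⟩ := hmemG' x hx
      obtain ⟨j, hj, rfl⟩ := hmemG' y hy
      rw [hGmul]
      exact hmemG _
    · intro g hg
      obtain ⟨i, hi, rfl⟩ := hmemG' g hg
      constructor
      · rw [hGmul, show (0 + i) % d = i by rw [Nat.zero_add]; exact Nat.mod_eq_of_lt hi]
      · rw [hGmul, show (i + 0) % d = i by rw [Nat.add_zero]; exact Nat.mod_eq_of_lt hi]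
    · intro g hg
      obtain ⟨i, hi, rfl⟩ := hmemG' g hg
      rcases Nat.eq_zero_or_pos i with h0 | h0
      · subst h0
        refine ⟨mpow n (r + 0), hmemG 0, ?_, ?_⟩ <;> rw [hGmul] <;> norm_num
      · refine ⟨mpow n (r + (d - i)), hmemG _, ?_, ?_⟩
        · rw [hGmul, show i + (d - i) = d by omega, Nat.mod_self]
        · rw [hGmul, show (d - i) + i = d by omega, Nat.mod_self]
  have hcard : G.ncard = d := by
    rw [hGdef, Set.ncard_coe_finset, Finset.card_image_of_injOn, Finset.card_range]
    intro i hi i' hi' he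
    exact hinj i (Finset.mem_range.mp (Finset.mem_coe.mp hi)) i'
      (Finset.mem_range.mp (Finset.mem_coe.mp hi')) he
  have hπd : ∀ p : ℕ, p.Prime → p ∣ d → p ∈ π := by
    intro p pp pd
    exact hN G hsub p pp (hcard ▸ pd)
  have hcop : Nat.Coprime k d := by
    rw [Nat.coprime_iff_gcd_eq_one]
    by_contra h
    obtain ⟨p, pp, pd⟩ := Nat.exists_prime_and_dvd h
    exact hπ' p pp (pd.trans (Nat.gcd_dvd_left k d)) (hπd p pp (pd.trans (Nat.gcd_dvd_right k d)))
  -- final step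
  refine ⟨mpow n r, ?_⟩
  intro t ht
  rw [Set.mem_iUnion] at ht
  obtain ⟨m, hm⟩ := ht
  haveI : NeZero d := ⟨hd.ne'⟩
  set u : ZMod d := -((m : ZMod d) + 1) * (k : ZMod d)⁻¹ with hudef
  set j : ℕ := u.val + d * (r + 1) with hjdef
  have hu : u * (k : ZMod d) = -((m : ZMod d) + 1) := by
    have hk1 : (k : ZMod d) * (k : ZMod d)⁻¹ = 1 := ZMod.coe_mul_inv_eq_one k hcop
    calc u * (k : ZMod d) = -((m : ZMod d) + 1) * ((k : ZMod d) * (k : ZMod d)⁻¹) := by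
          rw [hudef]; ring
      _ = -((m : ZMod d) + 1) := by rw [hk1, mul_one]
  have hj1 : d ∣ (m + 1 + j * k) := by
    have hval : ((u.val : ℕ) : ZMod d) = u := by simp [ZMod.natCast_val, ZMod.cast_id]
    have h0 : ((m + 1 + j * k : ℕ) : ZMod d) = 0 := by
      rw [hjdef]
      push_cast
      simp only [ZMod.natCast_val, ZMod.cast_id, ZMod.natCast_self]
      linear_combination hu
    exact (ZMod.natCast_eq_zero_iff _ _).mp h0
  have hj2 : r ≤ m + 1 + j * k := by
    have h1 : d * (r + 1) ≤ j := Nat.le_add_left _ _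
    have h2 : r + 1 ≤ d * (r + 1) := Nat.le_mul_of_pos_left _ hd
    have h3 : j ≤ j * k := Nat.le_mul_of_pos_right _ hk
    omega
  have hmem' : t ∈ mpow Z (m + j * k + 1) := by
    rw [show m + j * k + 1 = m + 1 + j * k by omega, hZper]
    exact hm
  have hφt : φ t (mpow n (m + j * k + 1)) := hpow (m + j * k) t hmem'
  have hfin : mpow n (m + j * k + 1) = mpow n r := by
    rw [show m + j * k + 1 = r + (m + 1 + j * k - r) by omega, hred]
    obtain ⟨q, hq⟩ := Nat.dvd_sub hj1 hdr
    rw [hq, Nat.mul_mod_right]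
    rfl
  exact hfin ▸ hφt
end

section
/- Let H, H' be L-equivalent H-classes of a finite semigroup S. Then the Schützenberger groups Γ_R(H) and Γ_R(H') are isomorphic. -/
open Pointwise

section Aux

variable {M : Type*} [Semigroup M]

/-- Left multiplication by an element of `M¹`. -/
def lmul (s : Option M) (h : M) : M := s.elim h (· * h)

lemma lmul_lmul (p q : Option M) (x : M) : lmul p (lmul q x) = lmul (omul p q) x := by
  cases p <;> cases q <;> simp [lmul, omul, mul_assoc]

lemma lmul_hmul (p : Option M) (x : M) (s : Option M) :
    lmul p (hmul x s) = hmul (lmul p x) s := by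
  cases p <;> cases s <;> simp [lmul, hmul, mul_assoc]

lemma leL_iff {x y : M} : leL x y ↔ ∃ p : Option M, x = lmul p y := by
  constructor
  · rintro (rfl | ⟨u, rfl⟩)
    · exact ⟨none, rfl⟩
    · exact ⟨some u, rfl⟩
  · rintro ⟨p, rfl⟩
    cases p
    · exact Or.inl rfl
    · exact Or.inr ⟨_, rfl⟩

lemma leR_iff {x y : M} : leR x y ↔ ∃ p : Option M, x = hmul y p := by
  constructor
  · rintro (rfl | ⟨u, rfl⟩)
    · exact ⟨none, rfl⟩
    · exact ⟨some u, rfl⟩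
  · rintro ⟨p, rfl⟩
    cases p
    · exact Or.inl rfl
    · exact Or.inr ⟨_, rfl⟩

lemma leL_trans {x y z : M} (h1 : leL x y) (h2 : leL y z) : leL x z := by
  rw [leL_iff] at *
  obtain ⟨p, rfl⟩ := h1
  obtain ⟨q, rfl⟩ := h2
  exact ⟨omul p q, lmul_lmul p q z⟩

end Aux

/-- If the `H`-classes of `a` and `b` in a finite semigroup `S` are `L`-equivalent, then the
Schützenberger groups `Γ_R(H_a)` and `Γ_R(H_b)` are isomorphic: there is a bijection between
them respecting composition. -/
theorem stmt_7 {S : Type*} [Semigroup S] [Fintype S] (a b : S) (hab : eqL a b) :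
    ∃ e : gammaR a ≃ gammaR b,
      ∀ (f g h : HclsT a → HclsT a) (hf : f ∈ gammaR a) (hg : g ∈ gammaR a)
        (hh : h ∈ gammaR a), h = f ∘ g →
          (e ⟨h, hh⟩).1 = (e ⟨f, hf⟩).1 ∘ (e ⟨g, hg⟩).1 := by
  obtain ⟨hab1, hab2⟩ := hab
  obtain ⟨v, hv⟩ := leL_iff.mp hab1   -- a = lmul v b
  obtain ⟨u, hu⟩ := leL_iff.mp hab2   -- b = lmul u a
  -- key cancellation lemmas
  have keyA : ∀ x : S, eqH x a → lmul v (lmul u x) = x := by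
    intro x hx
    obtain ⟨m, hm⟩ := leR_iff.mp hx.2.1
    rw [hm, lmul_hmul, ← hu, lmul_hmul, ← hv]
  have keyB : ∀ y : S, eqH y b → lmul u (lmul v y) = y := by
    intro y hy
    obtain ⟨m, hm⟩ := leR_iff.mp hy.2.1
    rw [hm, lmul_hmul, ← hv, lmul_hmul, ← hu]
  have keyC : ∀ x : S, eqH x a → eqH (lmul u x) b := by
    intro x hx
    refine ⟨⟨?_, ?_⟩, ?_, ?_⟩
    · exact leL_trans (leL_iff.mpr ⟨u, rfl⟩) (leL_trans hx.1.1 hab1)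
    · refine leL_trans (leL_trans hab2 hx.1.2) ?_
      exact leL_iff.mpr ⟨v, (keyA x hx).symm⟩
    · obtain ⟨m, hm⟩ := leR_iff.mp hx.2.1
      exact leR_iff.mpr ⟨m, by rw [hm, lmul_hmul, ← hu]⟩
    · obtain ⟨n, hn⟩ := leR_iff.mp hx.2.2
      exact leR_iff.mpr ⟨n, by rw [hu, hn, lmul_hmul]⟩
  have keyD : ∀ y : S, eqH y b → eqH (lmul v y) a := by
    intro y hy
    refine ⟨⟨?_, ?_⟩, ?_, ?_⟩
    · exact leL_trans (leL_iff.mpr ⟨v, rfl⟩) (leL_trans hy.1.1 hab2)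
    · refine leL_trans (leL_trans hab1 hy.1.2) ?_
      exact leL_iff.mpr ⟨u, (keyB y hy).symm⟩
    · obtain ⟨m, hm⟩ := leR_iff.mp hy.2.1
      exact leR_iff.mpr ⟨m, by rw [hm, lmul_hmul, ← hv]⟩
    · obtain ⟨n, hn⟩ := leR_iff.mp hy.2.2
      exact leR_iff.mpr ⟨n, by rw [hv, hn, lmul_hmul]⟩
  -- the bijection between the H-classes
  let φ : HclsT a → HclsT b := fun x => ⟨lmul u x.1, keyC x.1 x.2⟩
  let ψ : HclsT b → HclsT a := fun y => ⟨lmul v y.1, keyD y.1 y.2⟩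
  have hψφ : ∀ x, ψ (φ x) = x := fun x => Subtype.ext (keyA x.1 x.2)
  have hφψ : ∀ y, φ (ψ y) = y := fun y => Subtype.ext (keyB y.1 y.2)
  -- transport of Schützenberger transformations
  have memE : ∀ f : HclsT a → HclsT a, f ∈ gammaR a →
      (fun y => φ (f (ψ y))) ∈ gammaR b := by
    rintro f ⟨s, hs1, hs2⟩
    have hval : ∀ y : HclsT b, (φ (f (ψ y))).1 = hmul y.1 s := by
      intro y
      show lmul u (f (ψ y)).1 = hmul y.1 s
      rw [hs2 (ψ y), lmul_hmul]
      show hmul (lmul u (lmul v y.1)) s = hmul y.1 s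
      rw [keyB y.1 y.2]
    exact ⟨s, fun y => hval y ▸ (φ (f (ψ y))).2, hval⟩
  have memF : ∀ g : HclsT b → HclsT b, g ∈ gammaR b →
      (fun x => ψ (g (φ x))) ∈ gammaR a := by
    rintro g ⟨s, hs1, hs2⟩
    have hval : ∀ x : HclsT a, (ψ (g (φ x))).1 = hmul x.1 s := by
      intro x
      show lmul v (g (φ x)).1 = hmul x.1 s
      rw [hs2 (φ x), lmul_hmul]
      show hmul (lmul v (lmul u x.1)) s = hmul x.1 s
      rw [keyA x.1 x.2]
    exact ⟨s, fun x => hval x ▸ (ψ (g (φ x))).2, hval⟩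
  refine ⟨⟨fun f => ⟨fun y => φ (f.1 (ψ y)), memE f.1 f.2⟩,
          fun g => ⟨fun x => ψ (g.1 (φ x)), memF g.1 g.2⟩, ?_, ?_⟩, ?_⟩
  · intro f
    apply Subtype.ext
    funext x
    show ψ (φ (f.1 (ψ (φ x)))) = f.1 x
    rw [hψφ, hψφ]
  · intro g
    apply Subtype.ext
    funext y
    show φ (ψ (g.1 (φ (ψ y)))) = g.1 y
    rw [hφψ, hφψ]
  · rintro f g h hf hg hh rfl
    funext y
    show φ ((f ∘ g) (ψ y)) = φ (f (ψ (φ (g (ψ y)))))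
    rw [hψφ]
    rfl
end

section
/- Let S be a finite semigroup and let Š be the set of functions f : S → S such that (1) f(s) ≤_R s for all s, (2) s L s' implies f(s) L f(s'), and (3) there exists s_f ∈ S^1 such that f(s) R s implies f(s) = s·s_f. Then Š is a monoid under composition, and moreover for f, g ∈ Š one may take s_{f∘g} = s_f · s_g. -/
open Pointwise

/-- The monoid `Š` of functions `f : S → S` (written on the right, composed left to right)
such that `f(s) ≤_R s`, `f` preserves `L`-equivalence, and there is a right multiplier
`s_f ∈ S¹` with `f(s) R s → f(s) = s·s_f`. -/
def Scheck (S : Type*) [Semigroup S] : Set (S → S) :=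
  {f | (∀ s, leR (f s) s) ∧ (∀ s s', eqL s s' → eqL (f s) (f s')) ∧
       ∃ sf : Option S, ∀ s, eqR (f s) s → f s = hmul s sf}

lemma leR_refl {M : Type*} [Mul M] (a : M) : leR a a := Or.inl rfl

lemma leR_trans {M : Type*} [Semigroup M] {a b c : M} (h1 : leR a b) (h2 : leR b c) :
    leR a c := by
  rcases h1 with rfl | ⟨u, rfl⟩ <;> rcases h2 with rfl | ⟨v, rfl⟩
  · exact Or.inl rfl
  · exact Or.inr ⟨v, rfl⟩
  · exact Or.inr ⟨u, rfl⟩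
  · exact Or.inr ⟨v * u, (mul_assoc _ _ _)⟩

lemma leL_trans_s8 {M : Type*} [Semigroup M] {a b c : M} (h1 : leL a b) (h2 : leL b c) :
    leL a c := by
  rcases h1 with rfl | ⟨u, rfl⟩ <;> rcases h2 with rfl | ⟨v, rfl⟩
  · exact Or.inl rfl
  · exact Or.inr ⟨v, rfl⟩
  · exact Or.inr ⟨u, rfl⟩
  · exact Or.inr ⟨u * v, (mul_assoc _ _ _).symm⟩

lemma eqL_trans {M : Type*} [Semigroup M] {a b c : M} (h1 : eqL a b) (h2 : eqL b c) :
    eqL a c := ⟨leL_trans_s8 h1.1 h2.1, leL_trans_s8 h2.2 h1.2⟩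

lemma hmul_hmul {M : Type*} [Semigroup M] (s : M) (a b : Option M) :
    hmul (hmul s a) b = hmul s (omul a b) := by
  cases a <;> cases b <;> simp [hmul, omul, mul_assoc]

/-- `Š` is a monoid under (left-to-right) composition: it contains the identity and is closed
under composition; moreover if `s_f`, `s_g` are right multipliers for `f`, `g` respectively,
then `s_f · s_g` (product in `S¹`) is a right multiplier for `f` followed by `g`. -/
theorem stmt_8 {S : Type*} [Semigroup S] [Fintype S] :
    (id ∈ Scheck S) ∧
    (∀ f g : S → S, f ∈ Scheck S → g ∈ Scheck S → (fun s => g (f s)) ∈ Scheck S) ∧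
    (∀ (f g : S → S) (sf sg : Option S), f ∈ Scheck S → g ∈ Scheck S →
      (∀ s, eqR (f s) s → f s = hmul s sf) → (∀ s, eqR (g s) s → g s = hmul s sg) →
      ∀ s, eqR (g (f s)) s → g (f s) = hmul s (omul sf sg)) := by
  refine ⟨⟨fun s => leR_refl s, fun s s' h => h, none, fun s _ => rfl⟩, ?_, ?_⟩
  · rintro f g ⟨hf1, hf2, sf, hf3⟩ ⟨hg1, hg2, sg, hg3⟩
    refine ⟨fun s => leR_trans (hg1 (f s)) (hf1 s),
      fun s s' h => hg2 _ _ (hf2 _ _ h), omul sf sg, ?_⟩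
    intro s hR
    have hfs : eqR (f s) s :=
      ⟨hf1 s, leR_trans hR.2 (hg1 (f s))⟩
    have hgfs : eqR (g (f s)) (f s) :=
      ⟨hg1 (f s), leR_trans hfs.1 hR.2⟩
    show g (f s) = _
    rw [hg3 _ hgfs, hf3 _ hfs, hmul_hmul]
  · rintro f g sf sg ⟨hf1, _, _⟩ ⟨hg1, _, _⟩ hf3 hg3 s hR
    have hfs : eqR (f s) s := ⟨hf1 s, leR_trans hR.2 (hg1 (f s))⟩
    have hgfs : eqR (g (f s)) (f s) := ⟨hg1 (f s), leR_trans hfs.1 hR.2⟩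
    rw [hg3 _ hgfs, hf3 _ hfs, hmul_hmul]
end

section
/- (Zeiger property) Let S be a finite semigroup and let (x_n, …, x_1) be an L-chain in S. Suppose F : S^n → S^n is a letter-by-letter transformation satisfying: whenever F(x_n,…,x_1) = (y_n,…,y_1) with x_{n-1} R y_{n-1} and x_n R y_n, there exists s ∈ S^1 with x_{n-1}·s = y_{n-1} and x_n·s = y_n. If F(x_n,…,x_1) = (y_n,…,y_1) with x_{n-1} = y_{n-1} and x_n R y_n, then x_n = y_n. -/
open Pointwise

/-- Zeiger property.  Strings `(x_n, …, x_1)` are encoded as lists in display order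
`[x_n, x_{n-1}, …, x_1]`; `L`-chains satisfy `x_{i+1} ≤_L x_i`, i.e. `List.Chain' leL`.
Suppose the letter-by-letter transformation `F` satisfies: whenever
`F(x_n, x_{n-1}, …) = (y_n, y_{n-1}, …)` with `x_{n-1} R y_{n-1}` and `x_n R y_n`, there is
`s ∈ S¹` with `x_{n-1}·s = y_{n-1}` and `x_n·s = y_n`.  If `F` maps the `L`-chain
`(x_n, x_{n-1}, …, x_1)` to `(y_n, y_{n-1}, …)` with `x_{n-1} = y_{n-1}` and `x_n R y_n`,
then `x_n = y_n`. -/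
theorem stmt_10 {S : Type*} [Semigroup S] (F : List S → List S)
    (hF : ∀ (a b : S) (t : List S) (a' b' : S) (t' : List S),
      F (a :: b :: t) = a' :: b' :: t' → eqR b b' → eqR a a' →
      ∃ s : Option S, hmul b s = b' ∧ hmul a s = a')
    (xn xm : S) (t : List S) (hc : List.Chain' leL (xn :: xm :: t))
    (yn ym : S) (t' : List S) (hFx : F (xn :: xm :: t) = yn :: ym :: t')
    (h1 : xm = ym) (h2 : eqR xn yn) : xn = yn := by
  subst h1
  obtain ⟨s, hs1, hs2⟩ := hF xn xm t yn xm t' hFx ⟨Or.inl rfl, Or.inl rfl⟩ h2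
  have hL : leL xn xm := hc.rel_head
  cases s with
  | none => exact hs2
  | some u =>
    simp only [hmul, Option.elim] at hs1 hs2
    rcases hL with rfl | ⟨v, rfl⟩
    · rw [← hs2, hs1]
    · rw [← hs2, mul_assoc, hs1]
end

section
/- With S, B, B̂ as above, B̂ maps the set of L-chains over S into the set of π'-free L-chains, and B̂ restricted to L-chains is idempotent: B̂ fixes every π'-free L-chain. -/
open Pointwise

/-- A preblowup operator on a finite semigroup `S` realized as a subsemigroup of `P(T)` via an
injective semigroup embedding `ι : S → Set T`. -/
def IsPreblowupE (π : Set ℕ) {T : Type*} {S : Type*} [Semigroup T] [Semigroup S]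
    (ι : S → Set T) (B : S → S) (m : S → Option S) : Prop :=
  (∀ s, piFree π s → B s = s) ∧
  (∀ s, ¬ piFree π s → ltH (B s) s) ∧
  (∀ s, ι s ⊆ ι (B s)) ∧
  (∀ s, B s = hmul s (m s)) ∧
  (∀ s s', eqL s s' → m s = m s')

/-- An `L`-chain `(s_n, …, s_1)` (with `s_{i+1} ≤_L s_i`), encoded as the list
`[s_1, s_2, …, s_n]` whose head is the first (rightmost) letter. -/
def isChain {S : Type*} [Mul S] (l : List S) : Prop := List.Chain' (fun a b => leL b a) l

/-- A flag: a strict `L`-chain. -/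
def isFlag {S : Type*} [Mul S] (l : List S) : Prop :=
  List.Chain' (fun a b => leL b a ∧ ¬ leL a b) l

/-- Elementary reduction `(…, s', s, …) → (…, s', …)` when `s' L s`: delete the earlier-read
entry `s` of two adjacent `L`-equivalent entries, keeping `s'`. -/
def rstep {S : Type*} [Mul S] (l l' : List S) : Prop :=
  ∃ (l₁ : List S) (s s' : S) (l₂ : List S),
    eqL s' s ∧ l = l₁ ++ s :: s' :: l₂ ∧ l' = l₁ ++ s' :: l₂

/-- Henckell's formula: `B̂(ε) = ε`, `B̂(b⃗·s) = B̂(b⃗Δ_{m_s}) · B(s)`, where strings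
`(x_n, …, x_1)` are encoded as lists `[x_1, …, x_n]` (head = rightmost letter) and
`Δ_u` multiplies every coordinate on the right by `u ∈ S¹`. -/
def Bhat {S : Type*} [Semigroup S] (B : S → S) (m : S → Option S) : List S → List S
  | [] => []
  | s :: b => B s :: Bhat B m (b.map (fun x => hmul x (m s)))
termination_by l => l.length
decreasing_by simp

/-!
Every letter of `B̂ l` is a value of `B`, hence `π'`-free (a fixed point of `B` cannot lie strictly
`H`-below itself) and fixed by `B`. Since `B s ≤_L s` and right multiplication preserves `≤_L`,
`B̂` preserves `L`-chains. On an `L`-chain whose letters are fixed by `B`, the later letters lie in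
`S¹ s` and `s · m_s = B s = s`, so `m_s` fixes them all and `B̂` is the identity; applied to
`B̂ l` this gives idempotence.
-/

section GreenL

variable {S : Type*} [Semigroup S]

theorem leL_refl (a : S) : leL a a := Or.inl rfl

theorem leL_trans_s15 {a b c : S} (hab : leL a b) (hbc : leL b c) : leL a c := by
  rcases hab with rfl | ⟨u, rfl⟩
  · exact hbc
  rcases hbc with rfl | ⟨v, rfl⟩
  · exact Or.inr ⟨u, rfl⟩
  · exact Or.inr ⟨u * v, (mul_assoc u v c).symm⟩

instance : Trans (fun a b : S => leL b a) (fun a b => leL b a) (fun a b => leL b a) :=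
  ⟨fun hab hbc => leL_trans_s15 hbc hab⟩

theorem hmul_mul_left (u a : S) (t : Option S) : hmul (u * a) t = u * hmul a t := by
  cases t with
  | none => rfl
  | some w => exact mul_assoc u a w

theorem leL.hmul_right {a b : S} (h : leL a b) (t : Option S) : leL (hmul a t) (hmul b t) := by
  rcases h with rfl | ⟨u, rfl⟩
  · exact leL_refl _
  · exact Or.inr ⟨u, hmul_mul_left u b t⟩

theorem hmul_eq_self_of_leL {a b : S} {t : Option S} (h : leL a b) (hb : hmul b t = b) :
    hmul a t = a := by
  rcases h with rfl | ⟨u, rfl⟩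
  · exact hb
  · rw [hmul_mul_left, hb]

theorem isChain_map_hmul {l : List S} (hl : isChain l) (t : Option S) :
    isChain (l.map (hmul · t)) :=
  List.isChain_map _ |>.mpr (hl.imp fun _ _ h => h.hmul_right t)

end GreenL

section Bhat

variable {S : Type*} [Semigroup S] {B : S → S} {m : S → Option S}

@[simp]
theorem Bhat_nil : Bhat B m [] = [] := by
  rw [Bhat]

@[simp]
theorem Bhat_cons (s : S) (b : List S) :
    Bhat B m (s :: b) = B s :: Bhat B m (b.map (hmul · (m s))) := by
  rw [Bhat]

theorem exists_eq_of_mem_Bhat {x : S} {l : List S} (hx : x ∈ Bhat B m l) : ∃ s, x = B s := by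
  induction l using Bhat.induct m with
  | case1 => simp at hx
  | case2 s b ih =>
    simp only [List.map_attach_eq_pmap, List.pmap_eq_map] at ih
    rw [Bhat_cons, List.mem_cons] at hx
    rcases hx with rfl | hx
    · exact ⟨s, rfl⟩
    · exact ih hx

theorem isChain_Bhat (hBle : ∀ s, leL (B s) s) (hBm : ∀ s, B s = hmul s (m s))
    {l : List S} (hl : isChain l) : isChain (Bhat B m l) := by
  induction l using Bhat.induct m with
  | case1 =>
    rw [Bhat_nil]
    exact List.isChain_nil
  | case2 s b ih =>
    simp only [List.map_attach_eq_pmap, List.pmap_eq_map] at ih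
    rw [Bhat_cons, isChain, List.Chain', List.isChain_cons]
    refine ⟨?_, ih (isChain_map_hmul hl.tail (m s))⟩
    cases b with
    | nil => simp
    | cons t b =>
      rintro y hy
      rw [List.map_cons, Bhat_cons, List.head?_cons, Option.mem_some_iff] at hy
      subst hy
      have hts : leL t s := (List.isChain_cons_cons.mp hl).1
      exact leL_trans_s15 (hBle _) (hBm s ▸ hts.hmul_right (m s))

theorem Bhat_eq_self (hBm : ∀ s, B s = hmul s (m s)) {l : List S} (hl : isChain l)
    (hfix : ∀ x ∈ l, B x = x) : Bhat B m l = l := by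
  induction l with
  | nil => simp
  | cons s b ih =>
    have hBs : B s = s := hfix s List.mem_cons_self
    have hmap : b.map (hmul · (m s)) = b := by
      refine List.map_congr_left (fun x hx => ?_) |>.trans b.map_id
      exact hmul_eq_self_of_leL (hl.rel_cons hx) (hBm s ▸ hBs)
    rw [Bhat_cons, hmap, hBs, ih hl.tail fun x hx => hfix x (List.mem_cons_of_mem s hx)]

end Bhat

section Preblowup

variable {S : Type*} [Semigroup S] {π : Set ℕ} {B : S → S}

theorem leL_apply_self (hB1 : ∀ s, piFree π s → B s = s)
    (hB2 : ∀ s, ¬ piFree π s → ltH (B s) s) (s : S) : leL (B s) s := by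
  by_cases h : piFree π s
  · rw [hB1 s h]
    exact leL_refl s
  · exact (hB2 s h).1

theorem piFree_apply (hB2 : ∀ s, ¬ piFree π s → ltH (B s) s)
    (hidem : ∀ s, B (B s) = B s) (s : S) : piFree π (B s) := by
  by_contra h
  have hlt := hidem s ▸ hB2 _ h
  exact hlt.2.2 ⟨⟨leL_refl _, leL_refl _⟩, ⟨Or.inl rfl, Or.inl rfl⟩⟩

end Preblowup

theorem stmt_15_general (π : Set ℕ) {T S : Type*} [Semigroup T] [Semigroup S]
    (ι : S → Set T)
    (B : S → S) (m : S → Option S) (hpre : IsPreblowupE π ι B m)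
    (hidem : ∀ s, B (B s) = B s) :
    (∀ l : List S, isChain l →
      isChain (Bhat B m l) ∧ ∀ x ∈ Bhat B m l, piFree π x) ∧
    (∀ l : List S, isChain l → (∀ x ∈ l, piFree π x) → Bhat B m l = l) ∧
    (∀ l : List S, isChain l → Bhat B m (Bhat B m l) = Bhat B m l) := by
  obtain ⟨hB1, hB2, -, hBm, -⟩ := hpre
  have hchain : ∀ l : List S, isChain l → isChain (Bhat B m l) :=
    fun _ => isChain_Bhat (leL_apply_self hB1 hB2) hBm
  refine ⟨fun l hl => ⟨hchain l hl, fun x hx => ?_⟩,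
    fun l hl hfree => Bhat_eq_self hBm hl fun x hx => hB1 x (hfree x hx),
    fun l hl => Bhat_eq_self hBm (hchain l hl) fun x hx => ?_⟩
  · obtain ⟨s, rfl⟩ := exists_eq_of_mem_Bhat hx
    exact piFree_apply hB2 hidem s
  · obtain ⟨s, rfl⟩ := exists_eq_of_mem_Bhat hx
    exact hidem s

/-- `B̂` maps `L`-chains over `S` to `π'`-free `L`-chains, fixes every `π'`-free `L`-chain, and
hence is idempotent on `L`-chains. -/
theorem stmt_15 (π : Set ℕ) {T S : Type*} [Semigroup T] [Fintype T] [Semigroup S] [Fintype S]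
    (ι : S → Set T) (hιinj : Function.Injective ι) (hιmul : ∀ a b, ι (a * b) = ι a * ι b)
    (B : S → S) (m : S → Option S) (hpre : IsPreblowupE π ι B m)
    (hidem : ∀ s, B (B s) = B s) :
    (∀ l : List S, isChain l →
      isChain (Bhat B m l) ∧ ∀ x ∈ Bhat B m l, piFree π x) ∧
    (∀ l : List S, isChain l → (∀ x ∈ l, piFree π x) → Bhat B m l = l) ∧
    (∀ l : List S, isChain l → Bhat B m (Bhat B m l) = Bhat B m l) :=
  stmt_15_general π ι B m hpre hidem
end
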